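/- A symmetric function f : Gⁿ → G (invariant under all permutations of its arguments) is n-ary associative if and only if f(f(x₁,...,xₙ),x_{n+1},...,x_{2n-1}) = f(x₁,f(x₂,...,x_{n+1}),x_{n+2},...,x_{2n-1}) for all x₁,...,x_{2n-1} ∈ G. -/

import Mathlib

/-- Substituting `f` applied to the window `x_i, ..., x_{i+n-1}` into slot `i`
of `f` applied to the remaining outer variables among `x_1, ..., x_{2n-1}`. -/
def nestAt {R : Type*} (n : ℕ) (f : (Fin n → R) → R) (i : Fin n)
    (x : Fin (2 * n - 1) → R) : R :=
  f (fun j =>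
    if (j : ℕ) < (i : ℕ) then x ⟨j, by have := j.isLt; have := i.isLt; omega⟩
    else if (j : ℕ) = (i : ℕ) then
      f (fun k => x ⟨(i : ℕ) + (k : ℕ), by have := k.isLt; have := i.isLt; omega⟩)
    else x ⟨(j : ℕ) + n - 1, by have := j.isLt; have := i.isLt; omega⟩)

/-- `f` is `n`-ary associative: all the bracketings coincide. -/
def IsNAssoc {R : Type*} (n : ℕ) (f : (Fin n → R) → R) : Prop :=
  ∀ i j : Fin n, ∀ x : Fin (2 * n - 1) → R, nestAt n f i x = nestAt n f j x


/-!
Rotating the variables `x_1, ..., x_{2n-1}` cyclically by one place turns the bracketing at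
position `i + 1` into the bracketing at position `i`, up to a cyclic permutation of the outer
arguments, which the symmetry of `f` absorbs. Hence if the first two bracketings agree for all
inputs, induction on the position shows that every bracketing equals the first one.
-/

lemma val_finRotate {m : ℕ} (j : Fin m) :
    (finRotate m j : ℕ) = if (j : ℕ) + 1 = m then 0 else (j : ℕ) + 1 := by
  cases m with
  | zero => exact j.elim0
  | succ m => rw [coe_finRotate]; simp [Fin.ext_iff]

section

variable {G : Type*} {n : ℕ} {f : (Fin n → G) → G}

theorem nestAt_comp_finRotate
    (hsym : ∀ (σ : Equiv.Perm (Fin n)) (x : Fin n → G), f (x ∘ σ) = f x)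
    {i : ℕ} (hi : i + 1 < n) (x : Fin (2 * n - 1) → G) :
    nestAt n f ⟨i, by omega⟩ (x ∘ finRotate _) = nestAt n f ⟨i + 1, hi⟩ x := by
  unfold nestAt
  conv_rhs => rw [← hsym (finRotate n)]
  congr 1
  funext ⟨j, hj⟩
  simp only [Function.comp_apply, val_finRotate]
  split_ifs <;> first
    | omega
    | (congr 1; ext; simp only [val_finRotate]; split_ifs <;> omega)
    | (congr 1; funext k; congr 1; ext; simp only [val_finRotate]; split_ifs <;> omega)

theorem nestAt_eq_nestAt_zero
    (hsym : ∀ (σ : Equiv.Perm (Fin n)) (x : Fin n → G), f (x ∘ σ) = f x)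
    (hn : 1 < n)
    (h01 : ∀ x : Fin (2 * n - 1) → G,
      nestAt n f ⟨0, Nat.zero_lt_of_lt hn⟩ x = nestAt n f ⟨1, hn⟩ x)
    (i : Fin n) (x : Fin (2 * n - 1) → G) :
    nestAt n f i x = nestAt n f ⟨0, Nat.zero_lt_of_lt hn⟩ x := by
  obtain ⟨i, hi⟩ := i
  induction i generalizing x with
  | zero => rfl
  | succ i ih =>
    rw [← nestAt_comp_finRotate hsym hi, ih, nestAt_comp_finRotate hsym (by omega), h01]

end

theorem stmt_12 {G : Type*} (n : ℕ) (hn : 2 ≤ n) (f : (Fin n → G) → G)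
    (hsym : ∀ (σ : Equiv.Perm (Fin n)) (x : Fin n → G), f (x ∘ σ) = f x) :
    IsNAssoc n f ↔
      ∀ x : Fin (2 * n - 1) → G,
        nestAt n f ⟨0, by omega⟩ x = nestAt n f ⟨1, by omega⟩ x := by
  refine ⟨fun h x => h _ _ x, fun h01 i j x => ?_⟩
  rw [nestAt_eq_nestAt_zero hsym hn h01 i, nestAt_eq_nestAt_zero hsym hn h01 j]
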